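/- arXiv:2508.11577 — 2 statements merged into one kernel-verified Lean document; each statement's English description precedes it below -/
import Mathlib

section
/- Self-affine attractors containing all small patterns: Given M ∈ ℕ, there exists a finite family φ₁,…,φ_N of contracting affine maps of ℝ² that are not similarities (each of the form φ_i(x) = Dx + b_i, where D is a diagonal 2×2 matrix whose two diagonal entries are distinct and lie in (0,1)), such that the attractor F of the iterated function system {φ₁,…,φ_N} — the unique non-empty compact set F ⊆ ℝ² with F = ∪_{i=1}^N φ_i(F) — is totally disconnected and contains a homothetic copy of every set with at most M elements; that is, for every non-empty finite C ⊆ ℝ² with at most M elements there exist λ > 0 and x ∈ ℝ² with λC + x ⊆ F. -/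
namespace SelfAffine

/-- The set of reals `∑ ε k / b^(k+1)` with digits `ε k ≤ b-2`. -/
def K (b : ℕ) : Set ℝ :=
  {y | ∃ ε : ℕ → ℕ, (∀ k, ε k ≤ b - 2) ∧ y = ∑' k, (ε k : ℝ) * ((b : ℝ)⁻¹) ^ (k + 1)}

variable {b : ℕ}

lemma bR_pos (hb : 2 ≤ b) : (0:ℝ) < b := by exact_mod_cast Nat.lt_of_lt_of_le two_pos hb

lemma q_nonneg (hb : 2 ≤ b) : (0:ℝ) ≤ (b:ℝ)⁻¹ := by positivity

lemma q_lt_one (hb : 2 ≤ b) : (b:ℝ)⁻¹ < 1 := by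
  rw [inv_lt_one_iff₀]
  right
  exact_mod_cast Nat.lt_of_lt_of_le one_lt_two hb

lemma summable_digits (hb : 2 ≤ b) {ε : ℕ → ℕ} {B : ℝ} (hε : ∀ k, (ε k : ℝ) ≤ B) :
    Summable (fun k => (ε k : ℝ) * ((b : ℝ)⁻¹) ^ (k + 1)) := by
  have hq0 := q_nonneg hb
  have hq1 := q_lt_one hb
  have hg : Summable (fun k : ℕ => (B * (b:ℝ)⁻¹) * ((b:ℝ)⁻¹) ^ k) :=
    (summable_geometric_of_lt_one hq0 hq1).mul_left _
  refine Summable.of_nonneg_of_le (fun k => by positivity) (fun k => ?_) hg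
  calc (ε k : ℝ) * ((b:ℝ)⁻¹)^(k+1) ≤ B * ((b:ℝ)⁻¹)^(k+1) :=
      mul_le_mul_of_nonneg_right (hε k) (by positivity)
    _ = (B * (b:ℝ)⁻¹) * ((b:ℝ)⁻¹)^k := by ring

lemma tsum_digits_nonneg (hb : 2 ≤ b) (ε : ℕ → ℕ) :
    0 ≤ ∑' k, (ε k : ℝ) * ((b : ℝ)⁻¹) ^ (k + 1) :=
  tsum_nonneg fun k => by positivity

lemma tsum_digits_le (hb : 2 ≤ b) {ε : ℕ → ℕ} {B : ℝ} (hB : 0 ≤ B)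
    (hε : ∀ k, (ε k : ℝ) ≤ B) :
    ∑' k, (ε k : ℝ) * ((b : ℝ)⁻¹) ^ (k + 1) ≤ B * ((b:ℝ) - 1)⁻¹ := by
  have hq0 := q_nonneg hb
  have hq1 := q_lt_one hb
  have hbne : (b:ℝ) ≠ 0 := by positivity
  have hb1 : (1:ℝ) < (b:ℝ) := by exact_mod_cast Nat.lt_of_lt_of_le one_lt_two hb
  have hsum : Summable (fun k => (ε k : ℝ) * ((b : ℝ)⁻¹) ^ (k + 1)) := summable_digits hb hε
  have hsum2 : Summable (fun k : ℕ => (B * (b:ℝ)⁻¹) * ((b:ℝ)⁻¹) ^ k) :=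
    (summable_geometric_of_lt_one hq0 hq1).mul_left _
  have key : ∑' k, (ε k : ℝ) * ((b : ℝ)⁻¹) ^ (k + 1)
      ≤ ∑' k : ℕ, (B * (b:ℝ)⁻¹) * ((b:ℝ)⁻¹) ^ k := by
    apply Summable.tsum_le_tsum _ hsum hsum2
    intro k
    calc (ε k : ℝ) * ((b:ℝ)⁻¹)^(k+1) ≤ B * ((b:ℝ)⁻¹)^(k+1) :=
        mul_le_mul_of_nonneg_right (hε k) (by positivity)
      _ = (B * (b:ℝ)⁻¹) * ((b:ℝ)⁻¹)^k := by ring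
  rw [tsum_mul_left, tsum_geometric_of_lt_one hq0 hq1] at key
  have : B * (b:ℝ)⁻¹ * (1 - (b:ℝ)⁻¹)⁻¹ = B * ((b:ℝ) - 1)⁻¹ := by
    rw [mul_assoc]
    congr 1
    rw [← one_div, ← one_div, div_mul_div_comm]
    rw [one_mul]
    congr 1
    field_simp
  rwa [this] at key

lemma zero_mem_K (hb : 2 ≤ b) : (0:ℝ) ∈ K b := by
  refine ⟨fun _ => 0, fun k => Nat.zero_le _, ?_⟩
  simp

lemma K_subset_Icc (hb : 2 ≤ b) : K b ⊆ Set.Icc (0:ℝ) 1 := by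
  rintro y ⟨ε, hε, rfl⟩
  have hb1 : (1:ℝ) < (b:ℝ) := by exact_mod_cast Nat.lt_of_lt_of_le one_lt_two hb
  have hεB : ∀ k, (ε k : ℝ) ≤ ((b:ℝ) - 1) := by
    intro k
    have := hε k
    have h2 : (ε k : ℝ) ≤ ((b - 2 : ℕ) : ℝ) := by exact_mod_cast this
    have : ((b - 2 : ℕ) : ℝ) ≤ (b:ℝ) - 1 := by
      have : (b - 2 : ℕ) ≤ b - 1 := by omega
      have h3 : ((b - 2:ℕ):ℝ) ≤ ((b-1:ℕ):ℝ) := by exact_mod_cast this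
      have h4 : ((b-1:ℕ):ℝ) = (b:ℝ) - 1 := by
        have : (1:ℕ) ≤ b := by omega
        push_cast [Nat.cast_sub this]
        ring
      linarith
    linarith
  constructor
  · exact tsum_digits_nonneg hb ε
  · have := tsum_digits_le hb (by linarith) hεB
    have h5 : ((b:ℝ) - 1) * ((b:ℝ) - 1)⁻¹ = 1 := by
      apply mul_inv_cancel₀; linarith
    linarith [this, h5.le]


lemma digit_le_b (hb : 2 ≤ b) {ε : ℕ → ℕ} (hε : ∀ k, ε k ≤ b - 2) :
    ∀ k, (ε k : ℝ) ≤ (b:ℝ) := by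
  intro k
  exact_mod_cast Nat.le_of_lt (by have := hε k; omega)

/-- Coding map from digit sequences. -/
noncomputable def code (b : ℕ) (ε : ℕ → Fin (b-1)) : ℝ :=
  ∑' k, ((ε k : ℕ) : ℝ) * ((b : ℝ)⁻¹) ^ (k + 1)

lemma K_eq_range (hb : 2 ≤ b) : K b = Set.range (code b) := by
  ext y; constructor
  · rintro ⟨ε, hε, rfl⟩
    refine ⟨fun k => ⟨ε k, by have := hε k; omega⟩, rfl⟩
  · rintro ⟨ε, rfl⟩
    exact ⟨fun k => (ε k : ℕ), fun k => by show (ε k : ℕ) ≤ b - 2; have := (ε k).isLt; omega, rfl⟩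

lemma isCompact_K (hb : 2 ≤ b) : IsCompact (K b) := by
  rw [K_eq_range hb]
  have hbne : (b:ℝ) ≠ 0 := ne_of_gt (bR_pos hb)
  have hcont : Continuous (code b) := by
    apply continuous_tsum (u := fun k => ((b:ℝ)⁻¹) ^ k)
      (f := fun k (ε : ℕ → Fin (b-1)) => ((ε k : ℕ) : ℝ) * ((b : ℝ)⁻¹) ^ (k + 1))
    · intro k
      exact (continuous_of_discreteTopology
        (f := fun v : Fin (b-1) => ((v : ℕ) : ℝ) * ((b : ℝ)⁻¹) ^ (k + 1))).comp
        (continuous_apply k)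
    · exact summable_geometric_of_lt_one (q_nonneg hb) (q_lt_one hb)
    · intro k ε
      rw [Real.norm_eq_abs, abs_of_nonneg (by positivity)]
      have h1 : ((ε k : ℕ) : ℝ) ≤ (b:ℝ) := by
        exact_mod_cast Nat.le_of_lt (lt_of_lt_of_le (ε k).isLt (Nat.sub_le b 1))
      calc ((ε k : ℕ) : ℝ) * ((b : ℝ)⁻¹) ^ (k + 1)
          ≤ (b:ℝ) * ((b : ℝ)⁻¹) ^ (k + 1) :=
            mul_le_mul_of_nonneg_right h1 (by positivity)
        _ = ((b:ℝ) * (b:ℝ)⁻¹) * ((b : ℝ)⁻¹) ^ k := by ring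
        _ = ((b : ℝ)⁻¹) ^ k := by rw [mul_inv_cancel₀ hbne, one_mul]
  exact isCompact_range hcont

lemma tsum_shift_eq (hb : 2 ≤ b) {ε : ℕ → ℕ} (hε : ∀ k, ε k ≤ b - 2) :
    ∑' k, (ε k : ℝ) * ((b : ℝ)⁻¹) ^ (k + 1)
      = (ε 0 : ℝ) * (b:ℝ)⁻¹ + (b:ℝ)⁻¹ * ∑' k, (ε (k+1) : ℝ) * ((b : ℝ)⁻¹) ^ (k + 1) := by
  have hsum : Summable (fun k => (ε k : ℝ) * ((b : ℝ)⁻¹) ^ (k + 1)) :=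
    summable_digits hb (digit_le_b hb hε)
  rw [Summable.tsum_eq_zero_add hsum]
  congr 1
  · simp
  · rw [← tsum_mul_left]
    congr 1
    funext k
    ring

lemma step_mem (hb : 2 ≤ b) {z : ℝ} (hz : z ∈ K b) {v : ℕ} (hv : v ≤ b - 2) :
    (b:ℝ)⁻¹ * z + (v:ℝ) * (b:ℝ)⁻¹ ∈ K b := by
  obtain ⟨ε, hε, rfl⟩ := hz
  set ε' : ℕ → ℕ := fun k => Nat.casesOn k v ε with hε'
  have hε'b : ∀ k, ε' k ≤ b - 2 := by
    intro k; cases k with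
    | zero => exact hv
    | succ n => exact hε n
  refine ⟨ε', hε'b, ?_⟩
  rw [tsum_shift_eq hb hε'b]
  have : ∀ k, ε' (k+1) = ε k := fun k => rfl
  simp only [this]
  have h0 : ε' 0 = v := rfl
  rw [h0]
  ring

lemma mem_K_step (hb : 2 ≤ b) {y : ℝ} (hy : y ∈ K b) :
    ∃ v : ℕ, v ≤ b - 2 ∧ ∃ z ∈ K b, y = (b:ℝ)⁻¹ * z + (v:ℝ) * (b:ℝ)⁻¹ := by
  obtain ⟨ε, hε, rfl⟩ := hy
  refine ⟨ε 0, hε 0, ∑' k, (ε (k+1) : ℝ) * ((b : ℝ)⁻¹) ^ (k + 1),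
    ⟨fun k => ε (k+1), fun k => hε (k+1), rfl⟩, ?_⟩
  rw [tsum_shift_eq hb hε]
  ring


open MeasureTheory in
lemma K_cover (hb : 2 ≤ b) (n : ℕ) :
    K b ⊆ ⋃ f : Fin n → Fin (b-1),
      Set.Icc (∑ k : Fin n, ((f k : ℕ) : ℝ) * ((b:ℝ)⁻¹) ^ ((k:ℕ)+1))
        ((∑ k : Fin n, ((f k : ℕ) : ℝ) * ((b:ℝ)⁻¹) ^ ((k:ℕ)+1)) + ((b:ℝ)⁻¹) ^ n) := by
  rintro y ⟨ε, hε, rfl⟩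
  refine Set.mem_iUnion.2 ⟨fun k => ⟨ε k, by have := hε (k:ℕ); omega⟩, ?_⟩
  have hsum : Summable (fun k => (ε k : ℝ) * ((b : ℝ)⁻¹) ^ (k + 1)) :=
    summable_digits hb (digit_le_b hb hε)
  rw [← Summable.sum_add_tsum_nat_add n hsum]
  have hhead : ∑ k ∈ Finset.range n, (ε k : ℝ) * ((b : ℝ)⁻¹) ^ (k + 1)
      = ∑ k : Fin n, (ε (k:ℕ) : ℝ) * ((b:ℝ)⁻¹) ^ ((k:ℕ)+1) :=
    (Fin.sum_univ_eq_sum_range _ n).symm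
  have htail : ∑' k, (ε (k + n) : ℝ) * ((b : ℝ)⁻¹) ^ ((k + n) + 1)
      = ((b:ℝ)⁻¹) ^ n * ∑' k, (ε (k + n) : ℝ) * ((b : ℝ)⁻¹) ^ (k + 1) := by
    rw [← tsum_mul_left]
    congr 1; funext k; ring
  have hz : (∑' k, (ε (k + n) : ℝ) * ((b : ℝ)⁻¹) ^ (k + 1)) ∈ K b :=
    ⟨fun k => ε (k + n), fun k => hε (k + n), rfl⟩
  have hz01 := K_subset_Icc hb hz
  have hqn : (0:ℝ) ≤ ((b:ℝ)⁻¹) ^ n := by positivity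
  constructor
  · simp only [hhead]
    have : 0 ≤ ((b:ℝ)⁻¹) ^ n * ∑' k, (ε (k + n) : ℝ) * ((b : ℝ)⁻¹) ^ (k + 1) := by
      exact mul_nonneg hqn hz01.1
    rw [htail] at *
    linarith
  · simp only [hhead]
    rw [htail]
    have : ((b:ℝ)⁻¹) ^ n * (∑' k, (ε (k + n) : ℝ) * ((b : ℝ)⁻¹) ^ (k + 1)) ≤ ((b:ℝ)⁻¹) ^ n * 1 :=
      mul_le_mul_of_nonneg_left hz01.2 hqn
    linarith

open MeasureTheory in
lemma volume_K_zero (hb : 2 ≤ b) : volume (K b) = 0 := by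
  have hb0 := bR_pos hb
  have key : ∀ n : ℕ, volume (K b) ≤ ENNReal.ofReal ((((b:ℝ)-1) * (b:ℝ)⁻¹) ^ n) := by
    intro n
    have h1 : volume (K b) ≤ ∑ f : Fin n → Fin (b-1), ENNReal.ofReal (((b:ℝ)⁻¹) ^ n) := by
      refine le_trans (measure_mono (K_cover hb n)) ?_
      refine le_trans (measure_iUnion_fintype_le volume _) ?_
      apply Finset.sum_le_sum
      intro f _
      rw [Real.volume_Icc]
      simp
    rw [Finset.sum_const, Finset.card_univ] at h1
    have hcard : Fintype.card (Fin n → Fin (b-1)) = (b-1)^n := by simp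
    rw [hcard] at h1
    refine le_trans h1 ?_
    rw [nsmul_eq_mul]
    rw [← ENNReal.ofReal_natCast, ← ENNReal.ofReal_mul (by positivity)]
    apply ENNReal.ofReal_le_ofReal
    rw [mul_pow]
    apply mul_le_mul_of_nonneg_right _ (by positivity)
    rw [Nat.cast_pow]
    apply pow_le_pow_left₀ (by positivity)
    have h2 : ((b-1:ℕ):ℝ) = (b:ℝ) - 1 := by
      have : (1:ℕ) ≤ b := by omega
      push_cast [Nat.cast_sub this]; ring
    rw [h2]
  have hr0 : (0:ℝ) ≤ ((b:ℝ)-1) * (b:ℝ)⁻¹ := by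
    apply mul_nonneg _ (by positivity)
    have : (1:ℝ) ≤ (b:ℝ) := by exact_mod_cast Nat.one_le_of_lt hb
    linarith
  have hr1 : ((b:ℝ)-1) * (b:ℝ)⁻¹ < 1 := by
    rw [mul_inv_lt_iff₀ hb0, one_mul]
    linarith
  by_contra h
  have hpos : 0 < volume (K b) := pos_iff_ne_zero.2 h
  obtain ⟨δ, hδ0, hδ⟩ : ∃ δ : ℝ, 0 < δ ∧ ENNReal.ofReal δ < volume (K b) := by
    rcases ENNReal.lt_iff_exists_real_btwn.1 hpos with ⟨δ, _, h1, h2⟩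
    rcases lt_or_ge 0 δ with hh | hh
    · exact ⟨δ, hh, h2⟩
    · exact absurd h1 (by simp [ENNReal.ofReal_eq_zero.2 hh])
  obtain ⟨n, hn⟩ : ∃ n : ℕ, (((b:ℝ)-1) * (b:ℝ)⁻¹) ^ n < δ :=
    ((tendsto_pow_atTop_nhds_zero_of_lt_one hr0 hr1).eventually
      (eventually_lt_nhds hδ0)).exists
  exact absurd (lt_of_le_of_lt (key n) ((ENNReal.ofReal_lt_ofReal_iff hδ0).2 hn))
    (not_lt.2 hδ.le)

lemma not_Icc_subset_K (hb : 2 ≤ b) {u v : ℝ} (huv : u < v) : ¬ Set.Icc u v ⊆ K b := by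
  intro h
  have h1 : MeasureTheory.volume (Set.Icc u v) ≤ MeasureTheory.volume (K b) :=
    MeasureTheory.measure_mono h
  rw [Real.volume_Icc, volume_K_zero hb] at h1
  simp only [nonpos_iff_eq_zero, ENNReal.ofReal_eq_zero] at h1
  linarith


lemma exists_avoid (L : ℕ) (T : Finset ℤ) (h : T.card < L) :
    ∃ u : ℕ, u < L ∧ (u : ℤ) ∉ T := by
  by_contra hcon
  push_neg at hcon
  have hsub : (Finset.range L).image (Nat.cast : ℕ → ℤ) ⊆ T := by
    intro z hz
    simp only [Finset.mem_image, Finset.mem_range] at hz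
    obtain ⟨u, hu, rfl⟩ := hz
    exact hcon u hu
  have hcard := Finset.card_le_card hsub
  rw [Finset.card_image_of_injective _ Nat.cast_injective, Finset.card_range] at hcard
  omega

lemma floor_digit_bounds (hb : 2 ≤ b) (t : ℝ) :
    0 ≤ ⌊(b:ℝ)*t⌋ - (b:ℤ)*⌊t⌋ ∧ ⌊(b:ℝ)*t⌋ - (b:ℤ)*⌊t⌋ ≤ (b:ℤ) - 1 := by
  have hb0 := bR_pos hb
  constructor
  · have h1 : (((b:ℤ)*⌊t⌋ : ℤ) : ℝ) ≤ (b:ℝ)*t := by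
      push_cast
      exact mul_le_mul_of_nonneg_left (Int.floor_le t) hb0.le
    have := Int.le_floor.2 h1
    omega
  · have h2 : (b:ℝ)*t < (((b:ℤ)*⌊t⌋ + b : ℤ) : ℝ) := by
      push_cast
      have := Int.lt_floor_add_one t
      nlinarith
    have := Int.floor_lt.2 h2
    omega

lemma mem_K_of_digits (hb : 2 ≤ b) {y : ℝ} (hy0 : 0 ≤ y) (hy1 : y < 1)
    (hd : ∀ k : ℕ, ⌊(b:ℝ)^(k+1) * y⌋ - (b:ℤ) * ⌊(b:ℝ)^k * y⌋ ≤ (b:ℤ) - 2) :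
    y ∈ K b := by
  have hb0 := bR_pos hb
  have hbne : (b:ℝ) ≠ 0 := ne_of_gt hb0
  have hsplit : ∀ k : ℕ, (b:ℝ)^(k+1) * y = (b:ℝ) * ((b:ℝ)^k * y) := fun k => by ring
  have hd0 : ∀ k, 0 ≤ ⌊(b:ℝ)^(k+1) * y⌋ - (b:ℤ) * ⌊(b:ℝ)^k * y⌋ := by
    intro k
    have h := (floor_digit_bounds hb ((b:ℝ)^k * y)).1
    rwa [← hsplit k] at h
  have hεb : ∀ k, (⌊(b:ℝ)^(k+1) * y⌋ - (b:ℤ) * ⌊(b:ℝ)^k * y⌋).toNat ≤ b - 2 := by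
    intro k
    have h1 := hd k
    have h2 := hd0 k
    omega
  have hεcast : ∀ k, (((⌊(b:ℝ)^(k+1) * y⌋ - (b:ℤ) * ⌊(b:ℝ)^k * y⌋).toNat : ℕ) : ℝ)
      = ((⌊(b:ℝ)^(k+1) * y⌋ - (b:ℤ) * ⌊(b:ℝ)^k * y⌋ : ℤ) : ℝ) := by
    intro k
    exact_mod_cast congrArg (Int.cast : ℤ → ℝ) (Int.toNat_of_nonneg (hd0 k))
  have hsum : Summable (fun k =>
      (((⌊(b:ℝ)^(k+1) * y⌋ - (b:ℤ) * ⌊(b:ℝ)^k * y⌋).toNat : ℕ) : ℝ) * ((b:ℝ)⁻¹)^(k+1)) :=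
    summable_digits hb (digit_le_b hb hεb)
  have hfloor0 : ⌊y⌋ = 0 := Int.floor_eq_zero_iff.2 ⟨hy0, hy1⟩
  have hpartial : ∀ N : ℕ, ∑ k ∈ Finset.range N,
      (((⌊(b:ℝ)^(k+1) * y⌋ - (b:ℤ) * ⌊(b:ℝ)^k * y⌋).toNat : ℕ) : ℝ) * ((b:ℝ)⁻¹)^(k+1)
      = ((⌊(b:ℝ)^N * y⌋ : ℤ) : ℝ) * ((b:ℝ)⁻¹)^N := by
    intro N
    induction N with
    | zero => simp [hfloor0]
    | succ N ih =>
      rw [Finset.sum_range_succ, ih, hεcast N]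
      have hq : (b:ℝ) * ((b:ℝ)⁻¹)^(N+1) = ((b:ℝ)⁻¹)^N := by
        rw [pow_succ', ← mul_assoc, mul_inv_cancel₀ hbne, one_mul]
      push_cast
      linear_combination (-((⌊(b:ℝ)^N * y⌋ : ℤ) : ℝ)) * hq
  have hconv : Filter.Tendsto (fun N => ∑ k ∈ Finset.range N,
      (((⌊(b:ℝ)^(k+1) * y⌋ - (b:ℤ) * ⌊(b:ℝ)^k * y⌋).toNat : ℕ) : ℝ) * ((b:ℝ)⁻¹)^(k+1))
      Filter.atTop (nhds y) := by
    rw [← tendsto_sub_nhds_zero_iff]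
    refine squeeze_zero_norm (fun N => ?_)
      (tendsto_pow_atTop_nhds_zero_of_lt_one (q_nonneg hb) (q_lt_one hb))
    · skip
      rw [hpartial N]
      have hyq : y = ((b:ℝ)^N * y) * ((b:ℝ)⁻¹)^N := by
        rw [mul_comm ((b:ℝ)^N) y, mul_assoc, ← mul_pow, mul_inv_cancel₀ hbne, one_pow, mul_one]
      rw [Real.norm_eq_abs]
      have h1 : ((⌊(b:ℝ)^N * y⌋ : ℤ) : ℝ) * ((b:ℝ)⁻¹)^N - y
          = (((⌊(b:ℝ)^N * y⌋ : ℤ) : ℝ) - (b:ℝ)^N * y) * ((b:ℝ)⁻¹)^N := by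
        rw [sub_mul, ← hyq]
      rw [h1, abs_mul, abs_of_nonneg (by positivity : (0:ℝ) ≤ ((b:ℝ)⁻¹)^N)]
      have hfl := Int.floor_le ((b:ℝ)^N * y)
      have hfu := Int.lt_floor_add_one ((b:ℝ)^N * y)
      have habs : |((⌊(b:ℝ)^N * y⌋ : ℤ) : ℝ) - (b:ℝ)^N * y| ≤ 1 := by
        rw [abs_le]; constructor <;> linarith
      nlinarith [pow_nonneg (q_nonneg hb) N]
  have hfin := tendsto_nhds_unique hconv hsum.hasSum.tendsto_sum_nat
  refine ⟨fun k => (⌊(b:ℝ)^(k+1) * y⌋ - (b:ℤ) * ⌊(b:ℝ)^k * y⌋).toNat, hεb, ?_⟩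
  beta_reduce
  push_cast
  exact hfin


lemma pattern_lemma {M : ℕ} (hb8 : 8*M + 10 ≤ b)
    (S : Finset ℝ) (hcard : S.card ≤ M) (hS : ∀ c ∈ S, c ∈ Set.Icc (0:ℝ) (1/4)) :
    ∃ x : ℝ, 0 ≤ x ∧ x ≤ 1/2 ∧ ∀ c ∈ S, x + c ∈ K b := by
  have hb2 : 2 ≤ b := by omega
  have hb0 := bR_pos hb2
  have hbne : (b:ℝ) ≠ 0 := ne_of_gt hb0
  have hbR : (2:ℝ) ≤ (b:ℝ) := by exact_mod_cast hb2
  -- the bad sets of digits to avoid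
  set Bad : ℕ → Finset ℤ := fun k =>
    (S ×ˢ (({0,1} : Finset ℤ) ×ˢ ({0,1} : Finset ℤ))).image
      (fun p => (b:ℤ) - 1 - (⌊(b:ℝ)^(k+1) * p.1⌋ - (b:ℤ) * ⌊(b:ℝ)^k * p.1⌋)
        - p.2.1 + (b:ℤ) * p.2.2) with hBadDef
  have hBadcard : ∀ k, (Bad k).card ≤ 4 * M := by
    intro k
    calc (Bad k).card ≤ (S ×ˢ (({0,1} : Finset ℤ) ×ˢ ({0,1} : Finset ℤ))).card :=
        Finset.card_image_le
      _ ≤ 4 * M := by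
        rw [Finset.card_product, Finset.card_product]
        have h2 : ({0,1} : Finset ℤ).card = 2 := rfl
        rw [h2]
        omega
  -- choice of digits
  have hchoice : ∀ k : ℕ, ∃ v : ℕ, v < (if k = 0 then b/2 else b - 1) ∧ (v:ℤ) ∉ Bad k := by
    intro k
    apply exists_avoid
    have := hBadcard k
    split_ifs <;> omega
  choose u hu1 hu2 using hchoice
  have hub : ∀ k, u k ≤ b - 2 := by
    intro k
    have h := hu1 k
    by_cases hk : k = 0
    · rw [if_pos hk] at h; omega
    · rw [if_neg hk] at h; omega
  -- the point x and its partial data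
  have hsumx : Summable (fun k => (u k : ℝ) * ((b:ℝ)⁻¹)^(k+1)) :=
    summable_digits hb2 (digit_le_b hb2 hub)
  obtain ⟨x, hxdef⟩ : ∃ x : ℝ, x = ∑' k, (u k : ℝ) * ((b:ℝ)⁻¹)^(k+1) := ⟨_, rfl⟩
  obtain ⟨z, hzdef⟩ : ∃ z : ℕ → ℝ, z = fun n => ∑' k, (u (k+n) : ℝ) * ((b:ℝ)⁻¹)^(k+1) :=
    ⟨_, rfl⟩
  obtain ⟨X, hXdef⟩ : ∃ X : ℕ → ℝ,
      X = fun n => ∑ k ∈ Finset.range n, (u k : ℝ) * ((b:ℝ)⁻¹)^(k+1) := ⟨_, rfl⟩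
  obtain ⟨P, hPdef⟩ : ∃ P : ℕ → ℤ,
      P = fun n => ∑ k ∈ Finset.range n, (u k : ℤ) * (b:ℤ)^(n-1-k) := ⟨_, rfl⟩
  have hz0 : ∀ n, 0 ≤ z n := by
    intro n; rw [hzdef]; exact tsum_digits_nonneg hb2 _
  have hz1 : ∀ n, z n < 1 := by
    intro n
    have hB : ∀ k, ((u (k+n) : ℕ) : ℝ) ≤ (b:ℝ) - 2 := by
      intro k
      have h1 : ((u (k+n) : ℕ) : ℝ) ≤ ((b - 2 : ℕ) : ℝ) := by exact_mod_cast hub (k+n)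
      have h2 : ((b - 2 : ℕ) : ℝ) = (b:ℝ) - 2 := by
        have : (2:ℕ) ≤ b := hb2
        push_cast [Nat.cast_sub this]; ring
      linarith
    have h3 := tsum_digits_le hb2 (by linarith : (0:ℝ) ≤ (b:ℝ) - 2) hB
    have h4 : ((b:ℝ)-2) * ((b:ℝ)-1)⁻¹ < 1 := by
      rw [mul_inv_lt_iff₀ (by linarith : (0:ℝ) < (b:ℝ) - 1), one_mul]
      linarith
    rw [hzdef]
    exact lt_of_le_of_lt h3 h4
  have hxsplit : ∀ n, x = X n + ((b:ℝ)⁻¹)^n * z n := by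
    intro n
    rw [hxdef, hXdef, hzdef, ← Summable.sum_add_tsum_nat_add n hsumx]
    congr 1
    rw [← tsum_mul_left]
    congr 1
    funext k
    ring
  have hPX : ∀ n, ((P n : ℤ) : ℝ) = (b:ℝ)^n * X n := by
    intro n
    rw [hPdef, hXdef]
    push_cast
    rw [Finset.mul_sum]
    apply Finset.sum_congr rfl
    intro k hk
    rw [Finset.mem_range] at hk
    have key : (b:ℝ)^n * ((b:ℝ)⁻¹)^(k+1) = (b:ℝ)^(n-1-k) := by
      rw [inv_pow]
      rw [eq_comm]
      rw [eq_mul_inv_iff_mul_eq₀ (pow_ne_zero _ hbne)]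
      rw [← pow_add]
      congr 1
      omega
    calc (u k : ℝ) * (b:ℝ)^(n-1-k) = (u k : ℝ) * ((b:ℝ)^n * ((b:ℝ)⁻¹)^(k+1)) := by rw [key]
      _ = (b:ℝ)^n * ((u k : ℝ) * ((b:ℝ)⁻¹)^(k+1)) := by ring
  have hPrec : ∀ k, P (k+1) = (b:ℤ) * P k + (u k : ℤ) := by
    intro k
    rw [hPdef]
    simp only
    rw [Finset.sum_range_succ, Finset.mul_sum]
    have h0 : (k+1) - 1 - k = 0 := by omega
    rw [h0, pow_zero, mul_one]
    congr 1
    apply Finset.sum_congr rfl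
    intro j hj
    rw [Finset.mem_range] at hj
    have : (b:ℤ)^((k+1)-1-j) = (b:ℤ) * (b:ℤ)^(k-1-j) := by
      rw [← pow_succ']
      congr 1
      omega
    rw [this]
    ring
  -- bounds on x
  have hx0 : 0 ≤ x := by rw [hxdef]; exact tsum_digits_nonneg hb2 u
  have hxhalf : x ≤ 1/2 := by
    have h1 := hxsplit 1
    have hX1 : X 1 = (u 0 : ℝ) * ((b:ℝ)⁻¹)^1 := by
      rw [hXdef]; simp [Finset.sum_range_one]
    have hu0 : (u 0 : ℝ) ≤ (b:ℝ)/2 - 1 := by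
      have h2 := hu1 0
      rw [if_pos rfl] at h2
      have h3 : 2 * (u 0) + 2 ≤ b := by omega
      have h4 : ((2 * u 0 + 2 : ℕ) : ℝ) ≤ (b:ℝ) := by exact_mod_cast h3
      push_cast at h4
      linarith
    have hq0 : (0:ℝ) < (b:ℝ)⁻¹ := by positivity
    have e1 : (u 0:ℝ) * ((b:ℝ)⁻¹)^1 ≤ ((b:ℝ)/2 - 1) * (b:ℝ)⁻¹ := by
      rw [pow_one]
      exact mul_le_mul_of_nonneg_right hu0 hq0.le
    have e2 : ((b:ℝ)⁻¹)^1 * z 1 ≤ (b:ℝ)⁻¹ * 1 := by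
      rw [pow_one]
      exact mul_le_mul_of_nonneg_left (hz1 1).le hq0.le
    have e3 : ((b:ℝ)/2 - 1) * (b:ℝ)⁻¹ + (b:ℝ)⁻¹ * 1 = 1/2 := by
      field_simp
      ring
    rw [h1, hX1]
    linarith
  -- the theta bounds
  have hfloorsplit : ∀ (c:ℝ) (n:ℕ), ⌊(b:ℝ)^n*(x+c)⌋ = P n + ⌊(b:ℝ)^n*c + z n⌋ := by
    intro c n
    have h3 : (b:ℝ)^n * (((b:ℝ)⁻¹)^n * z n) = z n := by
      rw [← mul_assoc, ← mul_pow, mul_inv_cancel₀ hbne, one_pow, one_mul]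
    have h1 : (b:ℝ)^n*(x+c) = ((P n : ℤ) : ℝ) + ((b:ℝ)^n*c + z n) := by
      rw [hPX n]
      calc (b:ℝ)^n*(x+c)
          = (b:ℝ)^n * X n + (b:ℝ)^n * (((b:ℝ)⁻¹)^n * z n) + (b:ℝ)^n * c := by
            rw [hxsplit n]; ring
        _ = _ := by rw [h3]; ring
    rw [h1, Int.floor_intCast_add]
  have hθ : ∀ (c:ℝ) (n:ℕ), 0 ≤ ⌊(b:ℝ)^n*(x+c)⌋ - P n - ⌊(b:ℝ)^n*c⌋ ∧
      ⌊(b:ℝ)^n*(x+c)⌋ - P n - ⌊(b:ℝ)^n*c⌋ ≤ 1 := by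
    intro c n
    rw [hfloorsplit c n]
    have h1 : ⌊(b:ℝ)^n*c⌋ ≤ ⌊(b:ℝ)^n*c + z n⌋ :=
      Int.floor_le_floor (by linarith [hz0 n])
    have h2 : ⌊(b:ℝ)^n*c + z n⌋ < ⌊(b:ℝ)^n*c⌋ + 2 := by
      apply Int.floor_lt.2
      push_cast
      have := Int.lt_floor_add_one ((b:ℝ)^n*c)
      have := hz1 n
      linarith
    omega
  -- conclusion
  refine ⟨x, hx0, hxhalf, ?_⟩
  intro c hc
  obtain ⟨hc0, hc4⟩ := hS c hc
  apply mem_K_of_digits hb2 (by linarith) (by linarith)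
  intro k
  obtain ⟨h10, h11⟩ := hθ c (k+1)
  obtain ⟨h00, h01⟩ := hθ c k
  have hub' : ⌊(b:ℝ)^(k+1)*(x+c)⌋ - (b:ℤ)*⌊(b:ℝ)^k*(x+c)⌋ ≤ (b:ℤ) - 1 := by
    have h := (floor_digit_bounds hb2 ((b:ℝ)^k*(x+c))).2
    have e : (b:ℝ)*((b:ℝ)^k*(x+c)) = (b:ℝ)^(k+1)*(x+c) := by ring
    rwa [e] at h
  by_contra hcon
  push_neg at hcon
  have heq : ⌊(b:ℝ)^(k+1)*(x+c)⌋ - (b:ℤ)*⌊(b:ℝ)^k*(x+c)⌋ = (b:ℤ) - 1 := by omega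
  have hid : ⌊(b:ℝ)^(k+1)*(x+c)⌋ - (b:ℤ)*⌊(b:ℝ)^k*(x+c)⌋
      = (u k : ℤ) + (⌊(b:ℝ)^(k+1)*c⌋ - (b:ℤ)*⌊(b:ℝ)^k*c⌋)
        + (⌊(b:ℝ)^(k+1)*(x+c)⌋ - P (k+1) - ⌊(b:ℝ)^(k+1)*c⌋)
        - (b:ℤ)*(⌊(b:ℝ)^k*(x+c)⌋ - P k - ⌊(b:ℝ)^k*c⌋) := by
    linear_combination (hPrec k)
  apply hu2 k
  rw [hBadDef]
  apply Finset.mem_image.2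
  refine ⟨(c, (⌊(b:ℝ)^(k+1)*(x+c)⌋ - P (k+1) - ⌊(b:ℝ)^(k+1)*c⌋,
      ⌊(b:ℝ)^k*(x+c)⌋ - P k - ⌊(b:ℝ)^k*c⌋)), ?_, ?_⟩
  · rw [Finset.mem_product]
    refine ⟨hc, ?_⟩
    rw [Finset.mem_product]
    constructor <;> simp only [Finset.mem_insert, Finset.mem_singleton] <;> omega
  · simp only
    linear_combination hid - heq

/-! ### The two-dimensional construction -/

def base (M : ℕ) : Fin 2 → ℕ := ![8*M+10, 8*M+12]

def NN (M : ℕ) : ℕ := (8*M+9) * (8*M+11)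

def ee (M : ℕ) (i : Fin (NN M)) (j : Fin 2) : ℕ :=
  if j = 0 then i.val % (8*M+9) else i.val / (8*M+9)

noncomputable def dvec (M : ℕ) (j : Fin 2) : ℝ := ((base M j : ℕ) : ℝ)⁻¹

noncomputable def bvec (M : ℕ) (i : Fin (NN M)) (j : Fin 2) : ℝ :=
  (ee M i j : ℝ) * dvec M j

def FF (M : ℕ) : Set (Fin 2 → ℝ) := {p | ∀ j, p j ∈ K (base M j)}

noncomputable def phi (M : ℕ) (i : Fin (NN M)) (x : Fin 2 → ℝ) : Fin 2 → ℝ :=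
  fun j => dvec M j * x j + bvec M i j

variable {M : ℕ}

lemma base_ge (j : Fin 2) : 8*M + 10 ≤ base M j := by
  fin_cases j <;> simp [base]

lemma base_two (j : Fin 2) : 2 ≤ base M j := by have := base_ge (M := M) j; omega

lemma ee_le (i : Fin (NN M)) (j : Fin 2) : ee M i j ≤ base M j - 2 := by
  have hi : i.val < (8*M+9) * (8*M+11) := i.isLt
  fin_cases j
  · simp only [ee, if_pos rfl]
    have h1 : i.val % (8*M+9) < 8*M+9 := Nat.mod_lt _ (by omega)
    simp [base]
    omega
  · simp only [ee]
    norm_num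
    have h1 : i.val / (8*M+9) < 8*M+11 := by
      rw [Nat.div_lt_iff_lt_mul (by omega : 0 < 8*M+9)]
      calc i.val < (8*M+9) * (8*M+11) := hi
        _ = (8*M+11) * (8*M+9) := by ring
    simp [base]
    omega

lemma ee_surj {v0 v1 : ℕ} (h0 : v0 ≤ base M 0 - 2) (h1 : v1 ≤ base M 1 - 2) :
    ∃ i : Fin (NN M), ee M i 0 = v0 ∧ ee M i 1 = v1 := by
  have hb0 : base M 0 = 8*M+10 := by simp [base]
  have hb1 : base M 1 = 8*M+12 := by simp [base]
  rw [hb0] at h0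
  rw [hb1] at h1
  have hv0 : v0 < 8*M+9 := by omega
  have hv1 : v1 < 8*M+11 := by omega
  have hlt : v0 + (8*M+9) * v1 < NN M := by
    show v0 + (8*M+9) * v1 < (8*M+9) * (8*M+11)
    calc v0 + (8*M+9) * v1 < (8*M+9) * v1 + (8*M+9) := by omega
      _ = (8*M+9) * (v1 + 1) := by ring
      _ ≤ (8*M+9) * (8*M+11) := Nat.mul_le_mul_left _ (by omega)
  refine ⟨⟨v0 + (8*M+9) * v1, hlt⟩, ?_, ?_⟩
  · simp only [ee, if_pos rfl]
    rw [Nat.add_mul_mod_self_left]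
    exact Nat.mod_eq_of_lt hv0
  · simp only [ee]
    norm_num
    rw [Nat.add_mul_div_left _ _ (by omega : 0 < 8*M+9)]
    rw [Nat.div_eq_of_lt hv0]
    omega

lemma dvec_pos (j : Fin 2) : 0 < dvec M j := by
  rw [dvec]
  have := bR_pos (base_two (M := M) j)
  positivity

lemma dvec_lt_one (j : Fin 2) : dvec M j < 1 := q_lt_one (base_two j)

lemma FF_nonempty : (FF M).Nonempty :=
  ⟨fun _ => 0, fun j => zero_mem_K (base_two j)⟩

lemma FF_compact : IsCompact (FF M) := by
  have : FF M = Set.pi Set.univ (fun j => K (base M j)) := by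
    ext p
    simp [FF, Set.mem_pi]
  rw [this]
  exact isCompact_univ_pi (fun j => isCompact_K (base_two j))


lemma FF_invariant : FF M = ⋃ i, phi M i '' FF M := by
  apply Set.Subset.antisymm
  · intro p hp
    choose v hv w hwK hpw using fun j => mem_K_step (base_two (M := M) j) (hp j)
    obtain ⟨i, hi0, hi1⟩ := ee_surj (hv 0) (hv 1)
    refine Set.mem_iUnion.2 ⟨i, w, fun j => hwK j, ?_⟩
    funext j
    have hee : ee M i j = v j := by fin_cases j <;> assumption
    show dvec M j * w j + bvec M i j = p j
    rw [hpw j]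
    simp only [bvec, dvec, hee]
    try ring
  · intro p hp
    rw [Set.mem_iUnion] at hp
    obtain ⟨i, w, hwF, rfl⟩ := hp
    intro j
    have h := step_mem (base_two (M := M) j) (hwF j) (ee_le i j)
    have e : phi M i w j = ((base M j : ℕ):ℝ)⁻¹ * w j + ((ee M i j : ℕ):ℝ) * ((base M j : ℕ):ℝ)⁻¹ := by
      simp only [phi, bvec, dvec]
    rw [e]
    exact h

/-- The approximation maps for the coding argument. -/
noncomputable def AA (M : ℕ) (σ : ℕ → Fin (NN M)) (n : ℕ) (q : Fin 2 → ℝ) : Fin 2 → ℝ :=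
  fun j => (∑ k ∈ Finset.range n, (ee M (σ k) j : ℝ) * (dvec M j)^(k+1)) + (dvec M j)^n * q j

lemma AA_zero (σ : ℕ → Fin (NN M)) (q : Fin 2 → ℝ) : AA M σ 0 q = q := by
  funext j; simp [AA]

lemma AA_step (σ : ℕ → Fin (NN M)) (n : ℕ) (q : Fin 2 → ℝ) :
    AA M σ n (phi M (σ n) q) = AA M σ (n+1) q := by
  funext j
  simp only [AA, phi, bvec]
  rw [Finset.sum_range_succ]
  ring

lemma FF_unique (F' : Set (Fin 2 → ℝ)) (hne : F'.Nonempty) (hcomp : IsCompact F')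
    (hinv : F' = ⋃ i, phi M i '' F') : F' = FF M := by
  have hphimem : ∀ (i : Fin (NN M)) q, q ∈ F' → phi M i q ∈ F' := by
    intro i q hq
    rw [hinv]
    exact Set.mem_iUnion.2 ⟨i, q, hq, rfl⟩
  have hAmem : ∀ (σ : ℕ → Fin (NN M)) n q, q ∈ F' → AA M σ n q ∈ F' := by
    intro σ n
    induction n with
    | zero => intro q hq; rw [AA_zero]; exact hq
    | succ n ih => intro q hq; rw [← AA_step]; exact ih _ (hphimem _ _ hq)
  obtain ⟨R, hR⟩ := hcomp.isBounded.subset_closedBall 0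
  have hRb : ∀ y ∈ F', ∀ j, |y j| ≤ R := by
    intro y hy j
    have h1 := hR hy
    rw [Metric.mem_closedBall] at h1
    calc |y j| = dist (y j) ((0 : Fin 2 → ℝ) j) := by simp [Real.dist_eq]
      _ ≤ dist y 0 := dist_le_pi_dist y 0 j
      _ ≤ R := h1
  apply Set.Subset.antisymm
  · -- F' ⊆ FF
    intro p hp
    have hstep : ∀ s : F', ∃ t : Fin (NN M) × F', (s : Fin 2 → ℝ) = phi M t.1 (t.2 : Fin 2 → ℝ) := by
      rintro ⟨s, hs⟩
      rw [hinv] at hs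
      rw [Set.mem_iUnion] at hs
      obtain ⟨i, w, hwF, hws⟩ := hs
      exact ⟨(i, ⟨w, hwF⟩), hws.symm⟩
    choose T hT using hstep
    obtain ⟨seq, hseq0, hseqs⟩ : ∃ seq : ℕ → F', seq 0 = ⟨p, hp⟩ ∧ ∀ n, seq (n+1) = (T (seq n)).2 :=
      ⟨fun n => (fun s => (T s).2)^[n] ⟨p, hp⟩, rfl, fun n => Function.iterate_succ_apply' _ _ _⟩
    have hrec : ∀ n, p = AA M (fun m => (T (seq m)).1) n ((seq n : Fin 2 → ℝ)) := by
      intro n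
      induction n with
      | zero => rw [AA_zero, hseq0]
      | succ n ih =>
        rw [← AA_step]
        have h2 : ((seq n : Fin 2 → ℝ)) = phi M (T (seq n)).1 ((seq (n+1) : Fin 2 → ℝ)) := by
          rw [hseqs n]; exact hT (seq n)
        rw [← h2]
        exact ih
    intro j
    have hd2 : ∀ k : ℕ, ee M ((T (seq k)).1) j ≤ base M j - 2 := fun k => ee_le _ _
    have hsum : Summable (fun k => ((ee M ((T (seq k)).1) j : ℕ):ℝ) * (((base M j : ℕ):ℝ)⁻¹)^(k+1)) :=
      summable_digits (base_two j) (digit_le_b (base_two j) hd2)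
    have hzero : Filter.Tendsto (fun n => (dvec M j)^n * ((seq n : Fin 2 → ℝ) j))
        Filter.atTop (nhds 0) := by
      have hg : Filter.Tendsto (fun n => (dvec M j)^n * R) Filter.atTop (nhds 0) := by
        have := (tendsto_pow_atTop_nhds_zero_of_lt_one (dvec_pos (M := M) j).le
          (dvec_lt_one j)).mul_const R
        simpa using this
      refine squeeze_zero_norm (fun n => ?_) hg
      rw [Real.norm_eq_abs, abs_mul, abs_of_nonneg (pow_nonneg (dvec_pos (M := M) j).le n)]
      exact mul_le_mul_of_nonneg_left (hRb _ (seq n).2 j) (pow_nonneg (dvec_pos (M := M) j).le n)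
    have hptend : Filter.Tendsto
        (fun n => ∑ k ∈ Finset.range n, ((ee M ((T (seq k)).1) j : ℕ):ℝ) * (dvec M j)^(k+1))
        Filter.atTop (nhds (p j)) := by
      have hfor : ∀ n, ∑ k ∈ Finset.range n, ((ee M ((T (seq k)).1) j : ℕ):ℝ) * (dvec M j)^(k+1)
          = p j - (dvec M j)^n * ((seq n : Fin 2 → ℝ) j) := by
        intro n
        have h2 : p j = AA M (fun m => (T (seq m)).1) n ((seq n : Fin 2 → ℝ)) j := by
          rw [← hrec n]
        rw [AA] at h2
        linarith
      simp only [hfor]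
      have := Filter.Tendsto.sub (tendsto_const_nhds (x := p j)) hzero
      simpa using this
    have hfin := tendsto_nhds_unique hptend hsum.hasSum.tendsto_sum_nat
    refine ⟨fun k => ee M ((T (seq k)).1) j, hd2, ?_⟩
    beta_reduce
    exact hfin
  · -- FF ⊆ F'
    intro p hp
    choose εf hεb hεsum using hp
    have hchoose : ∀ k, ∃ i : Fin (NN M), ee M i 0 = εf 0 k ∧ ee M i 1 = εf 1 k :=
      fun k => ee_surj (hεb 0 k) (hεb 1 k)
    choose σ hσ0 hσ1 using hchoose
    obtain ⟨q0, hq0⟩ := hne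
    have htend : Filter.Tendsto (fun n => AA M σ n q0) Filter.atTop (nhds p) := by
      rw [tendsto_pi_nhds]
      intro j
      have heej : ∀ k, ((ee M (σ k) j : ℕ):ℝ) * (dvec M j)^(k+1)
          = ((εf j k : ℕ):ℝ) * (((base M j : ℕ):ℝ)⁻¹)^(k+1) := by
        intro k
        have hj : ee M (σ k) j = εf j k := by
          fin_cases j
          · exact hσ0 k
          · exact hσ1 k
        rw [hj]
        rfl
      have h1 : Filter.Tendsto
          (fun n => ∑ k ∈ Finset.range n, ((ee M (σ k) j : ℕ):ℝ) * (dvec M j)^(k+1))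
          Filter.atTop (nhds (p j)) := by
        simp only [heej]
        have h2 := (summable_digits (base_two (M := M) j)
          (digit_le_b (base_two j) (fun k => hεb j k))).hasSum.tendsto_sum_nat
        rw [← hεsum j] at h2
        exact h2
      have h2 : Filter.Tendsto (fun n => (dvec M j)^n * q0 j) Filter.atTop (nhds 0) := by
        have h3 := (tendsto_pow_atTop_nhds_zero_of_lt_one (dvec_pos (M := M) j).le
          (dvec_lt_one j)).mul_const (q0 j)
        simpa using h3
      have h4 := h1.add h2
      rw [add_zero] at h4
      exact h4
    exact hcomp.isClosed.mem_of_tendsto htend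
      (Filter.Eventually.of_forall (fun n => hAmem σ n q0 hq0))


lemma K_subsingleton_of_preconnected (hb : 2 ≤ b) {s : Set ℝ} (hs : s ⊆ K b)
    (hc : IsPreconnected s) : s.Subsingleton := by
  intro a ha c hcm
  by_contra hne
  rcases lt_or_gt_of_ne hne with h | h
  · exact not_Icc_subset_K hb h ((hc.Icc_subset ha hcm).trans hs)
  · exact not_Icc_subset_K hb h ((hc.Icc_subset hcm ha).trans hs)

lemma FF_totallyDisconnected : IsTotallyDisconnected (FF M) := by
  intro t hts htc p hp q hq
  funext j
  have himg : IsPreconnected ((fun y : Fin 2 → ℝ => y j) '' t) :=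
    htc.image _ (continuous_apply j).continuousOn
  have hsub : ((fun y : Fin 2 → ℝ => y j) '' t) ⊆ K (base M j) := by
    rintro _ ⟨y, hy, rfl⟩
    exact (hts hy) j
  exact K_subsingleton_of_preconnected (base_two j) hsub himg
    ⟨p, hp, rfl⟩ ⟨q, hq, rfl⟩

lemma FF_pattern (C : Set (Fin 2 → ℝ)) (hfin : C.Finite) (hne : C.Nonempty)
    (hcard : C.ncard ≤ M) :
    ∃ lam : ℝ, 0 < lam ∧ ∃ x : Fin 2 → ℝ, (fun p => lam • p + x) '' C ⊆ FF M := by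
  classical
  have hCtne : hfin.toFinset.Nonempty := hfin.toFinset_nonempty.2 hne
  have hCtcard : hfin.toFinset.card ≤ M := by
    rw [← Set.ncard_eq_toFinset_card C hfin]; exact hcard
  have hTne : ∀ j : Fin 2, (hfin.toFinset.image (fun p => p j)).Nonempty :=
    fun j => hCtne.image _
  obtain ⟨u, hu⟩ : ∃ u : Fin 2 → ℝ,
      u = fun j => (hfin.toFinset.image (fun p => p j)).min' (hTne j) := ⟨_, rfl⟩
  obtain ⟨V, hV⟩ : ∃ V : Fin 2 → ℝ,
      V = fun j => (hfin.toFinset.image (fun p => p j)).max' (hTne j) := ⟨_, rfl⟩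
  have huV : ∀ (j : Fin 2) (p : Fin 2 → ℝ), p ∈ hfin.toFinset → u j ≤ p j ∧ p j ≤ V j := by
    intro j p hp
    constructor
    · rw [hu]
      beta_reduce
      exact Finset.min'_le (hfin.toFinset.image (fun q => q j)) (p j)
        (Finset.mem_image_of_mem _ hp)
    · rw [hV]
      beta_reduce
      exact Finset.le_max' (hfin.toFinset.image (fun q => q j)) (p j)
        (Finset.mem_image_of_mem _ hp)
  obtain ⟨D, hD⟩ : ∃ D : ℝ, D = max (V 0 - u 0) (V 1 - u 1) + 1 := ⟨_, rfl⟩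
  have hVu : ∀ j, 0 ≤ V j - u j := by
    intro j
    obtain ⟨p, hp⟩ := hCtne
    have := huV j p hp
    linarith [this.1, this.2]
  have hD0 : 0 < D := by
    rw [hD]
    have h0 := hVu 0
    linarith [le_max_left (V 0 - u 0) (V 1 - u 1)]
  have hDj : ∀ j : Fin 2, V j - u j + 1 ≤ D := by
    intro j
    rw [hD]
    fin_cases j
    · simpa using le_max_left (V 0 - u 0) (V 1 - u 1)
    · simpa using le_max_right (V 0 - u 0) (V 1 - u 1)
  obtain ⟨lam, hlam⟩ : ∃ lam : ℝ, lam = (1/4) / D := ⟨_, rfl⟩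
  have hlam0 : 0 < lam := by rw [hlam]; positivity
  have hlamD : lam * D = 1/4 := by
    rw [hlam]; field_simp
  have hmem : ∀ j : Fin 2, ∃ x : ℝ, 0 ≤ x ∧ x ≤ 1/2 ∧
      ∀ c ∈ hfin.toFinset.image (fun p => lam * (p j - u j)), x + c ∈ K (base M j) := by
    intro j
    apply pattern_lemma (base_ge j) _ (le_trans Finset.card_image_le hCtcard)
    intro c hc
    rw [Finset.mem_image] at hc
    obtain ⟨p, hp, rfl⟩ := hc
    obtain ⟨hmin, hmax⟩ := huV j p hp
    constructor
    · exact mul_nonneg hlam0.le (by linarith)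
    · have ht : p j - u j ≤ D := by
        have := hDj j
        linarith
      calc lam * (p j - u j) ≤ lam * D := mul_le_mul_of_nonneg_left ht hlam0.le
        _ = 1/4 := hlamD
  choose xw hx0 hx12 hxmem using hmem
  refine ⟨lam, hlam0, fun j => xw j - lam * u j, ?_⟩
  rintro _ ⟨p, hpC, rfl⟩
  intro j
  show (lam • p + fun j => xw j - lam * u j) j ∈ K (base M j)
  have h1 : (lam • p + fun j => xw j - lam * u j) j = xw j + lam * (p j - u j) := by
    simp only [Pi.add_apply, Pi.smul_apply, smul_eq_mul]
    ring
  rw [h1]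
  exact hxmem j _ (Finset.mem_image_of_mem _ (hfin.mem_toFinset.2 hpC))

end SelfAffine


/-- **Self-affine attractors containing all small patterns.**  Given `M ∈ ℕ`, there is a finite
family `φ₁, …, φ_N` of contracting affine maps of `ℝ²` which are not similarities — each of the
form `φ i (x) = D x + b i`, where `D` is the diagonal `2 × 2` matrix with distinct diagonal
entries `d 0 ≠ d 1` lying in `(0,1)` — such that the attractor `F` of the iterated function
system `{φ₁, …, φ_N}` (the unique non-empty compact `F ⊆ ℝ²` with `F = ⋃ i, φ i '' F`) is
totally disconnected and contains a homothetic copy of every set with at most `M` elements. -/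
theorem self_affine_attractor_patterns (M : ℕ) (hM : 0 < M) :
    ∃ (N : ℕ) (d : Fin 2 → ℝ) (b : Fin N → (Fin 2 → ℝ)),
      0 < N ∧ (∀ j, d j ∈ Set.Ioo (0 : ℝ) 1) ∧ d 0 ≠ d 1 ∧
      ∃ F : Set (Fin 2 → ℝ),
        F.Nonempty ∧ IsCompact F ∧
        F = ⋃ i : Fin N, (fun x : Fin 2 → ℝ => fun j => d j * x j + b i j) '' F ∧
        (∀ F' : Set (Fin 2 → ℝ), F'.Nonempty → IsCompact F' →
          F' = ⋃ i : Fin N, (fun x : Fin 2 → ℝ => fun j => d j * x j + b i j) '' F' →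
          F' = F) ∧
        IsTotallyDisconnected F ∧
        ∀ C : Set (Fin 2 → ℝ), C.Finite → C.Nonempty → C.ncard ≤ M →
          ∃ lam : ℝ, 0 < lam ∧ ∃ x : Fin 2 → ℝ, (fun p => lam • p + x) '' C ⊆ F := by
  refine ⟨SelfAffine.NN M, SelfAffine.dvec M, SelfAffine.bvec M, ?_, ?_, ?_,
    SelfAffine.FF M, SelfAffine.FF_nonempty, SelfAffine.FF_compact, ?_, ?_,
    SelfAffine.FF_totallyDisconnected, ?_⟩
  · show 0 < (8*M+9) * (8*M+11)
    positivity
  · intro j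
    exact ⟨SelfAffine.dvec_pos j, SelfAffine.dvec_lt_one j⟩
  · simp only [SelfAffine.dvec]
    intro h
    have h2 : ((SelfAffine.base M 0 : ℕ) : ℝ) = ((SelfAffine.base M 1 : ℕ) : ℝ) :=
      inv_injective h
    have h3 : SelfAffine.base M 0 = SelfAffine.base M 1 := Nat.cast_injective h2
    simp [SelfAffine.base] at h3
  · exact SelfAffine.FF_invariant
  · intro F' h1 h2 h3
    exact SelfAffine.FF_unique F' h1 h2 h3
  · intro C h1 h2 h3
    exact SelfAffine.FF_pattern C h1 h2 h3
end

section
/- Power decay inequality: Let n ∈ ℕ, let β₁,…,β_n ∈ (0,1), and let α, c, δ ∈ (0,1) satisfy α^c ≤ δ²·(1 − (∏_{j=1}^n β_j)^{1−c}). Set N = ⌊δ/α⌋. Then N ≥ 1 and (∏_{j=1}^n β_j)^{N(1−c)} ≤ δ. -/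
lemma neg_log_le_half_inv {δ : ℝ} (h0 : 0 < δ) (h1 : δ < 1) :
    -Real.log δ ≤ 1 / (2 * δ) := by
  have hs0 : 0 < Real.sqrt δ⁻¹ := Real.sqrt_pos.mpr (by positivity)
  have hlog := Real.log_le_sub_one_of_pos hs0
  have hsq : Real.sqrt δ⁻¹ ^ 2 = δ⁻¹ := Real.sq_sqrt (by positivity)
  have hls : Real.log (Real.sqrt δ⁻¹) = Real.log δ⁻¹ / 2 := Real.log_sqrt (by positivity)
  have hli : Real.log δ⁻¹ = -Real.log δ := Real.log_inv δ
  have hsq2 : (Real.sqrt δ⁻¹ - 2) ^ 2 ≥ 0 := sq_nonneg _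
  rw [hls, hli] at hlog
  rw [le_div_iff₀ (by positivity)]
  have hdd : δ * δ⁻¹ = 1 := mul_inv_cancel₀ (ne_of_gt h0)
  nlinarith [mul_nonneg h0.le hsq2, hsq, hlog, hdd, mul_le_mul_of_nonneg_left hlog h0.le]

/-- **Power decay inequality.**  Let `β j ∈ (0,1)` for each `j ∈ Fin n`, and let
`α, c, δ ∈ (0,1)` satisfy `α^c ≤ δ² (1 − (∏_j β_j)^{1−c})`.  Set `N = ⌊δ/α⌋`.  Then `N ≥ 1` and
`(∏_j β_j)^{N(1−c)} ≤ δ`. -/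
theorem power_decay {n : ℕ} (β : Fin n → ℝ) (hβ : ∀ j, β j ∈ Set.Ioo (0 : ℝ) 1)
    (α c δ : ℝ) (hα : α ∈ Set.Ioo (0 : ℝ) 1) (hc : c ∈ Set.Ioo (0 : ℝ) 1)
    (hδ : δ ∈ Set.Ioo (0 : ℝ) 1)
    (h : α ^ c ≤ δ ^ 2 * (1 - (∏ j, β j) ^ (1 - c))) :
    1 ≤ ⌊δ / α⌋₊ ∧ (∏ j, β j) ^ ((⌊δ / α⌋₊ : ℝ) * (1 - c)) ≤ δ := by
  obtain ⟨hα0, hα1⟩ := hα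
  obtain ⟨hc0, hc1⟩ := hc
  obtain ⟨hδ0, hδ1⟩ := hδ
  set B := ∏ j, β j with hBdef
  have hB0 : 0 < B := Finset.prod_pos (fun j _ => (hβ j).1)
  -- B^{1-c} nonneg and < 1
  have hBpow0 : 0 ≤ B ^ (1 - c) := Real.rpow_nonneg hB0.le _
  have hαc0 : 0 < α ^ c := Real.rpow_pos_of_pos hα0 c
  have hBpow1 : B ^ (1 - c) < 1 := by nlinarith [sq_nonneg δ]
  -- α ≤ α^c
  have hααc : α ≤ α ^ c := by
    have := Real.rpow_le_rpow_of_exponent_ge hα0 hα1.le hc1.le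
    rwa [Real.rpow_one] at this
  -- α ≤ δ
  have hαδ : α ≤ δ := by nlinarith
  -- N ≥ 1
  have hN1 : 1 ≤ ⌊δ / α⌋₊ := by
    rw [Nat.one_le_floor_iff]
    exact (one_le_div hα0).mpr hαδ
  refine ⟨hN1, ?_⟩
  set N := ⌊δ / α⌋₊
  have hNr : (1 : ℝ) ≤ (N : ℝ) := by exact_mod_cast hN1
  have hlt : δ / α < (N : ℝ) + 1 := Nat.lt_floor_add_one _
  have h2N : δ < 2 * N * α := by
    have : δ / α < 2 * N := by linarith
    calc δ = (δ / α) * α := by field_simp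
    _ < 2 * N * α := by nlinarith
  -- logs
  have hB1 : B < 1 := by
    by_contra hcon
    push_neg at hcon
    have : (1:ℝ) ≤ B ^ (1 - c) := Real.one_le_rpow hcon (by linarith)
    linarith
  have hlogB : Real.log B < 0 := Real.log_neg hB0 hB1
  set L := -Real.log B with hLdef
  have hL0 : 0 < L := by simp [hLdef]; linarith
  -- 1 - B^{1-c} ≤ (1-c) L
  have hkey : 1 - B ^ (1 - c) ≤ (1 - c) * L := by
    have h1 := Real.log_le_sub_one_of_pos (Real.rpow_pos_of_pos hB0 (1 - c))
    rw [Real.log_rpow hB0] at h1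
    simp only [hLdef]
    nlinarith
  -- α ≤ δ^2 (1-c) L
  have hchain : α ≤ δ ^ 2 * ((1 - c) * L) := by nlinarith
  -- N (1-c) L ≥ 1/(2δ)
  have hmain : 1 / (2 * δ) ≤ (N : ℝ) * (1 - c) * L := by
    rw [div_le_iff₀ (by positivity)]
    have : δ ≤ 2 * N * (δ ^ 2 * ((1 - c) * L)) := by nlinarith
    nlinarith
  have hfin : -Real.log δ ≤ (N : ℝ) * (1 - c) * L :=
    le_trans (neg_log_le_half_inv hδ0 hδ1) hmain
  -- conclude via exp
  have : Real.log B * ((N : ℝ) * (1 - c)) ≤ Real.log δ := by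
    simp only [hLdef] at hfin; nlinarith
  calc B ^ ((N : ℝ) * (1 - c)) = Real.exp (Real.log B * ((N : ℝ) * (1 - c))) := by
        rw [Real.rpow_def_of_pos hB0]
    _ ≤ Real.exp (Real.log δ) := Real.exp_le_exp.mpr this
    _ = δ := Real.exp_log hδ0
end
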